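/- arXiv:1208.2463 — 6 statements merged into one kernel-verified Lean document; each statement's English description precedes it below -/
import Mathlib

section
/- Let T be a semistable decorated directed tree (each vertex v satisfies deg⁻(v) ≥ 1, deg⁺(v) ≥ 1, and deg⁻(v)+deg⁺(v) ≥ 3, where degrees count half-edges including external legs). If T' is obtained from T by contracting a contractible edge uv (an edge with u ≠ v such that deg⁺(u) = 1 or deg⁻(v) = 1), then T' is also semistable. -/
open Relation

/-- A decorated directed tree datum: a finite directed multigraph together with,
at each vertex, a number of outward and inward external legs. -/
structure DecTree where
  V : Type
  E : Type
  [hV : Finite V]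
  [hE : Finite E]
  src : E → V
  tgt : E → V
  legOut : V → ℕ
  legIn : V → ℕ

attribute [instance] DecTree.hV DecTree.hE

namespace DecTree

/-- Outward degree: outgoing edge-ends plus outward external legs. -/
noncomputable def degOut (T : DecTree) (v : T.V) : ℕ :=
  Nat.card {e : T.E // T.src e = v} + T.legOut v

/-- Inward degree: incoming edge-ends plus inward external legs. -/
noncomputable def degIn (T : DecTree) (v : T.V) : ℕ :=
  Nat.card {e : T.E // T.tgt e = v} + T.legIn v

/-- Undirected adjacency of the underlying graph. -/
def UAdj (T : DecTree) (a b : T.V) : Prop :=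
  ∃ e : T.E, (T.src e = a ∧ T.tgt e = b) ∨ (T.src e = b ∧ T.tgt e = a)

/-- The underlying graph is a tree: connected with `|V| = |E| + 1`. -/
def IsTree (T : DecTree) : Prop :=
  (∀ a b : T.V, ReflTransGen T.UAdj a b) ∧ Nat.card T.V = Nat.card T.E + 1

def Semistable (T : DecTree) : Prop :=
  ∀ v : T.V, 1 ≤ T.degIn v ∧ 1 ≤ T.degOut v ∧ 3 ≤ T.degIn v + T.degOut v

def Stable (T : DecTree) : Prop :=
  ∀ v : T.V, 2 ≤ T.degIn v ∧ 2 ≤ T.degOut v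

def Contractible (T : DecTree) (e : T.E) : Prop :=
  T.src e ≠ T.tgt e ∧ (T.degOut (T.src e) = 1 ∨ T.degIn (T.tgt e) = 1)

open Classical in
/-- Contract the edge `e0` (with distinct endpoints): the vertex `tgt e0` is merged
into `src e0`, and the merged vertex inherits all remaining half-edges (edge-ends
and external legs) of both. -/
noncomputable def contract (T : DecTree) (e0 : T.E) (h : T.src e0 ≠ T.tgt e0) : DecTree where
  V := {w : T.V // w ≠ T.tgt e0}
  E := {e : T.E // e ≠ e0}
  src e := if hs : T.src e.1 = T.tgt e0 then ⟨T.src e0, h⟩ else ⟨T.src e.1, hs⟩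
  tgt e := if ht : T.tgt e.1 = T.tgt e0 then ⟨T.src e0, h⟩ else ⟨T.tgt e.1, ht⟩
  legOut w := if w.1 = T.src e0 then T.legOut (T.src e0) + T.legOut (T.tgt e0) else T.legOut w.1
  legIn w := if w.1 = T.src e0 then T.legIn (T.src e0) + T.legIn (T.tgt e0) else T.legIn w.1

end DecTree

section Aux

variable {α : Type*} [Finite α]

private lemma card_split (p : α → Prop) (a : α) (ha : p a) :
    Nat.card {x // p x} = Nat.card {x // p x ∧ x ≠ a} + 1 := by
  classical
  rw [← Finite.card_option]
  apply Nat.card_congr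
  exact {
    toFun := fun x => if hx : x.1 = a then none else some ⟨x.1, x.2, hx⟩
    invFun := fun o => o.elim ⟨a, ha⟩ (fun y => ⟨y.1, y.2.1⟩)
    left_inv := by
      rintro ⟨x, hx⟩
      by_cases hxa : x = a
      · subst hxa; simp
      · simp [hxa]
    right_inv := by
      rintro (_ | ⟨y, hy1, hy2⟩)
      · simp
      · simp [hy2] }

private lemma card_or (p q : α → Prop) (hpq : ∀ x, p x → q x → False) :
    Nat.card {x // p x ∨ q x} = Nat.card {x // p x} + Nat.card {x // q x} := by
  classical
  rw [← Nat.card_sum]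
  exact Nat.card_congr (subtypeOrEquiv p q (by
    intro r hrp hrq x hx
    exact (hpq x (hrp x hx) (hrq x hx)).elim))

end Aux

namespace DecTree

variable (T : DecTree) (e0 : T.E) (h : T.src e0 ≠ T.tgt e0)

open Classical in
lemma contract_src_eq_iff (e : {e : T.E // e ≠ e0}) (w : T.V) (hw : w ≠ T.tgt e0) :
    (T.contract e0 h).src e = ⟨w, hw⟩ ↔
      ((T.src e.1 = T.tgt e0 ∧ T.src e0 = w) ∨ (T.src e.1 ≠ T.tgt e0 ∧ T.src e.1 = w)) := by
  show (if hs : T.src e.1 = T.tgt e0 then (⟨T.src e0, h⟩ : {w : T.V // w ≠ T.tgt e0})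
      else ⟨T.src e.1, hs⟩) = ⟨w, hw⟩ ↔ _
  split_ifs with hs
  · simp [Subtype.ext_iff, hs]
  · simp [Subtype.ext_iff, hs]

open Classical in
lemma contract_tgt_eq_iff (e : {e : T.E // e ≠ e0}) (w : T.V) (hw : w ≠ T.tgt e0) :
    (T.contract e0 h).tgt e = ⟨w, hw⟩ ↔
      ((T.tgt e.1 = T.tgt e0 ∧ T.src e0 = w) ∨ (T.tgt e.1 ≠ T.tgt e0 ∧ T.tgt e.1 = w)) := by
  show (if ht : T.tgt e.1 = T.tgt e0 then (⟨T.src e0, h⟩ : {w : T.V // w ≠ T.tgt e0})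
      else ⟨T.tgt e.1, ht⟩) = ⟨w, hw⟩ ↔ _
  split_ifs with ht
  · simp [Subtype.ext_iff, ht]
  · simp [Subtype.ext_iff, ht]

open Classical in
lemma degOut_contract_ne (w : T.V) (hw : w ≠ T.tgt e0) (hws : w ≠ T.src e0) :
    (T.contract e0 h).degOut ⟨w, hw⟩ = T.degOut w := by
  unfold degOut
  have hleg : (T.contract e0 h).legOut ⟨w, hw⟩ = T.legOut w := by
    show (if w = T.src e0 then _ else _) = _
    rw [if_neg hws]
  rw [hleg]
  congr 1
  apply Nat.card_congr
  refine ((Equiv.subtypeEquivRight (fun e => T.contract_src_eq_iff e0 h e w hw)).trans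
    (Equiv.subtypeSubtypeEquivSubtypeInter (fun e => e ≠ e0)
      (fun a => (T.src a = T.tgt e0 ∧ T.src e0 = w) ∨ (T.src a ≠ T.tgt e0 ∧ T.src a = w)))).trans (Equiv.subtypeEquivRight fun e => ?_)
  constructor
  · rintro ⟨-, (⟨-, hs⟩ | ⟨-, hs⟩)⟩
    · exact absurd hs hws.symm
    · exact hs
  · intro hs
    refine ⟨fun he => ?_, Or.inr ⟨fun ht => hw (hs ▸ ht), hs⟩⟩
    exact hws (by rw [← hs, he])

open Classical in
lemma degIn_contract_ne (w : T.V) (hw : w ≠ T.tgt e0) (hws : w ≠ T.src e0) :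
    (T.contract e0 h).degIn ⟨w, hw⟩ = T.degIn w := by
  unfold degIn
  have hleg : (T.contract e0 h).legIn ⟨w, hw⟩ = T.legIn w := by
    show (if w = T.src e0 then _ else _) = _
    rw [if_neg hws]
  rw [hleg]
  congr 1
  apply Nat.card_congr
  refine ((Equiv.subtypeEquivRight (fun e => T.contract_tgt_eq_iff e0 h e w hw)).trans
    (Equiv.subtypeSubtypeEquivSubtypeInter (fun e => e ≠ e0)
      (fun a => (T.tgt a = T.tgt e0 ∧ T.src e0 = w) ∨ (T.tgt a ≠ T.tgt e0 ∧ T.tgt a = w)))).trans (Equiv.subtypeEquivRight fun e => ?_)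
  constructor
  · rintro ⟨-, (⟨-, hs⟩ | ⟨-, hs⟩)⟩
    · exact absurd hs hws.symm
    · exact hs
  · intro hs
    refine ⟨fun he => hw (by rw [← hs, he]), Or.inr ⟨fun ht => hw (hs ▸ ht), hs⟩⟩

open Classical in
lemma degOut_contract_merged (hw : T.src e0 ≠ T.tgt e0) :
    (T.contract e0 h).degOut ⟨T.src e0, hw⟩ + 1
      = T.degOut (T.src e0) + T.degOut (T.tgt e0) := by
  unfold degOut
  have hleg : (T.contract e0 h).legOut ⟨T.src e0, hw⟩
      = T.legOut (T.src e0) + T.legOut (T.tgt e0) := by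
    show (if T.src e0 = T.src e0 then _ else _) = _
    rw [if_pos rfl]
  rw [hleg]
  have hcard : Nat.card {e : (T.contract e0 h).E // (T.contract e0 h).src e = ⟨T.src e0, hw⟩}
      = Nat.card {e : T.E // T.src e = T.tgt e0}
        + Nat.card {e : T.E // T.src e = T.src e0 ∧ e ≠ e0} := by
    rw [← card_or _ _ (fun e h1 h2 => h (h2.1.symm.trans h1))]
    apply Nat.card_congr
    refine ((Equiv.subtypeEquivRight (fun e =>
        T.contract_src_eq_iff e0 h e (T.src e0) hw)).trans
      (Equiv.subtypeSubtypeEquivSubtypeInter (fun e => e ≠ e0)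
        (fun a => (T.src a = T.tgt e0 ∧ T.src e0 = T.src e0) ∨ (T.src a ≠ T.tgt e0 ∧ T.src a = T.src e0)))).trans (Equiv.subtypeEquivRight fun e => ?_)
    constructor
    · rintro ⟨hne, (⟨hs, -⟩ | ⟨-, hs⟩)⟩
      · exact Or.inl hs
      · exact Or.inr ⟨hs, hne⟩
    · rintro (hs | ⟨hs, hne⟩)
      · exact ⟨fun he => h (he ▸ hs), Or.inl ⟨hs, rfl⟩⟩
      · exact ⟨hne, Or.inr ⟨fun ht => h (hs ▸ ht), hs⟩⟩
  rw [hcard, card_split (fun e => T.src e = T.src e0) e0 rfl]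
  ring

open Classical in
lemma degIn_contract_merged (hw : T.src e0 ≠ T.tgt e0) :
    (T.contract e0 h).degIn ⟨T.src e0, hw⟩ + 1
      = T.degIn (T.src e0) + T.degIn (T.tgt e0) := by
  unfold degIn
  have hleg : (T.contract e0 h).legIn ⟨T.src e0, hw⟩
      = T.legIn (T.src e0) + T.legIn (T.tgt e0) := by
    show (if T.src e0 = T.src e0 then _ else _) = _
    rw [if_pos rfl]
  rw [hleg]
  have hcard : Nat.card {e : (T.contract e0 h).E // (T.contract e0 h).tgt e = ⟨T.src e0, hw⟩}
      = Nat.card {e : T.E // T.tgt e = T.tgt e0 ∧ e ≠ e0}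
        + Nat.card {e : T.E // T.tgt e = T.src e0} := by
    rw [← card_or _ _ (fun e h1 h2 => h (h1.1.symm.trans h2 : _).symm)]
    apply Nat.card_congr
    refine ((Equiv.subtypeEquivRight (fun e =>
        T.contract_tgt_eq_iff e0 h e (T.src e0) hw)).trans
      (Equiv.subtypeSubtypeEquivSubtypeInter (fun e => e ≠ e0)
        (fun a => (T.tgt a = T.tgt e0 ∧ T.src e0 = T.src e0) ∨ (T.tgt a ≠ T.tgt e0 ∧ T.tgt a = T.src e0)))).trans (Equiv.subtypeEquivRight fun e => ?_)
    constructor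
    · rintro ⟨hne, (⟨hs, -⟩ | ⟨-, hs⟩)⟩
      · exact Or.inl ⟨hs, hne⟩
      · exact Or.inr hs
    · rintro (⟨hs, hne⟩ | hs)
      · exact ⟨hne, Or.inl ⟨hs, rfl⟩⟩
      · exact ⟨fun he => h (by rw [he] at hs; exact hs.symm), Or.inr ⟨fun ht => h (hs.symm.trans ht), hs⟩⟩
  rw [hcard, card_split (fun e => T.tgt e = T.tgt e0) e0 rfl]
  ring

end DecTree

/-- Contracting a contractible edge of a semistable decorated tree
yields a semistable decorated tree. -/
theorem contract_semistable (T : DecTree) (hT : T.IsTree) (hss : T.Semistable)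
    (e0 : T.E) (hc : T.Contractible e0) :
    (T.contract e0 hc.1).Semistable := by
  obtain ⟨h, -⟩ := hc
  rintro ⟨w, hw⟩
  by_cases hws : w = T.src e0
  · subst hws
    have hIn := T.degIn_contract_merged e0 h hw
    have hOut := T.degOut_contract_merged e0 h hw
    have h1 := hss (T.src e0)
    have h2 := hss (T.tgt e0)
    omega
  · rw [T.degIn_contract_ne e0 h w hw hws, T.degOut_contract_ne e0 h w hw hws]
    exact hss w
end

section
/- Let T be a semistable decorated directed tree and let T' be obtained from T by contracting a contractible edge uv, merging u and v into a vertex p. Then an edge e of T' (corresponding to an edge e ≠ uv of T) is contractible in T' if and only if e is contractible in T. -/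
open Relation

/-!
Contracting `e0 = uv` sends every vertex to itself except `v`, which goes to `u`; an edge `e ≠ e0`
keeps the images of its endpoints. Away from the merged vertex `p` all degrees are unchanged, and
at `p` they are `deg u + deg v - 1`. Because `T` is a tree, `e` is not parallel to `e0`, so it
does not become a loop. It remains to see that `degOut` is `1` at `src e` iff it is `1` at its
image (and dually for `degIn` at `tgt e`): if `src e = u`, both sides fail because `u` has the two
outgoing edges `e` and `e0`; if `src e = v`, semistability at `v` and contractibility of `e0` force
`degOut u = 1`, so `degOut p = degOut v`.
-/

lemma Nat.card_subtype_ne_add_one {α : Type*} [Finite α] {p : α → Prop} {a : α} (ha : p a) :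
    Nat.card {x : {x // x ≠ a} // p x} + 1 = Nat.card {x // p x} := by
  classical
  rw [← Finite.card_option, ← Nat.card_congr (Equiv.optionSubtypeNe (⟨a, ha⟩ : {x // p x}))]
  refine Nat.card_congr (Equiv.optionCongr ?_)
  exact { toFun := fun x => ⟨⟨x.1.1, x.2⟩, fun h => x.1.2 (congrArg Subtype.val h)⟩
          invFun := fun x => ⟨⟨x.1.1, fun h => x.2 (Subtype.ext h)⟩, x.1.2⟩ }

lemma Nat.card_subtype_ne_of_not {α : Type*} {p : α → Prop} {a : α} (ha : ¬ p a) :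
    Nat.card {x : {x // x ≠ a} // p x} = Nat.card {x // p x} :=
  Nat.card_congr (Equiv.subtypeSubtypeEquivSubtype fun hx h => ha (h ▸ hx))

namespace DecTree

variable {T : DecTree}

-- Otherwise the graph without `e` would still be connected, with fewer than `|V| - 1` edges.
theorem IsTree.eq_of_sym2_eq (hT : T.IsTree) {e f : T.E}
    (hef : s(T.src e, T.tgt e) = s(T.src f, T.tgt f)) : e = f := by
  by_contra hne
  let ends : {x // x ≠ e} → Sym2 T.V := fun x => s(T.src x.1, T.tgt x.1)
  have mem_ends : ∀ x, s(T.src x, T.tgt x) ∈ Set.range ends := by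
    intro x
    by_cases hx : x = e
    · subst hx
      exact ⟨⟨f, Ne.symm hne⟩, hef.symm⟩
    · exact ⟨⟨x, hx⟩, rfl⟩
  let G := SimpleGraph.fromEdgeSet (Set.range ends)
  have : Nonempty T.V := (Nat.card_pos_iff.1 (hT.2 ▸ Nat.succ_pos _)).1
  have hG : G.Connected := by
    refine ⟨fun a b => ?_⟩
    rw [SimpleGraph.reachable_iff_reflTransGen]
    refine ReflTransGen.lift' id ?_ a b (hT.1 a b)
    rintro a b ⟨x, hx⟩
    by_cases hab : a = b
    · exact hab ▸ .refl
    · refine .single ⟨?_, hab⟩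
      rcases hx with ⟨rfl, rfl⟩ | ⟨rfl, rfl⟩
      · exact mem_ends x
      · exact (Sym2.eq_swap ▸ mem_ends x : s(T.tgt x, T.src x) ∈ Set.range ends)
  have hcard := calc Nat.card T.V ≤ Nat.card G.edgeSet + 1 := hG.card_vert_le_card_edgeSet_add_one
    _ ≤ Nat.card {x // x ≠ e} + 1 := by
      gcongr
      refine (Nat.card_mono (Set.finite_range ends) ?_).trans (Finite.card_range_le ends)
      simp [G, SimpleGraph.edgeSet_fromEdgeSet]
    _ < Nat.card T.E + 1 := by
      gcongr
      exact Finite.card_subtype_lt (x := e) (by simp)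
  exact hcard.ne hT.2

lemma one_lt_degOut_of_src_eq {e f : T.E} (hef : e ≠ f) (hsrc : T.src e = T.src f) :
    1 < T.degOut (T.src f) := by
  have : Nontrivial {x // T.src x = T.src f} :=
    nontrivial_of_ne ⟨e, hsrc⟩ ⟨f, rfl⟩ (by simpa using hef)
  have := Finite.one_lt_card_iff_nontrivial.2 this
  unfold degOut
  omega

lemma one_lt_degIn_of_tgt_eq {e f : T.E} (hef : e ≠ f) (htgt : T.tgt e = T.tgt f) :
    1 < T.degIn (T.tgt f) := by
  have : Nontrivial {x // T.tgt x = T.tgt f} :=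
    nontrivial_of_ne ⟨e, htgt⟩ ⟨f, rfl⟩ (by simpa using hef)
  have := Finite.one_lt_card_iff_nontrivial.2 this
  unfold degIn
  omega

section Contraction

variable {e0 : T.E} (h : T.src e0 ≠ T.tgt e0)

open Classical in
noncomputable def contractVert (w : T.V) : (T.contract e0 h).V :=
  if hw : w = T.tgt e0 then ⟨T.src e0, h⟩ else ⟨w, hw⟩

lemma contract_src (x : (T.contract e0 h).E) :
    (T.contract e0 h).src x = contractVert h (T.src x.1) := rfl

lemma contract_tgt (x : (T.contract e0 h).E) :
    (T.contract e0 h).tgt x = contractVert h (T.tgt x.1) := rfl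

lemma contractVert_tgt : contractVert h (T.tgt e0) = contractVert h (T.src e0) :=
  (dif_pos rfl).trans (dif_neg h).symm

lemma contractVert_eq_contractVert_iff {a b : T.V} :
    contractVert h a = contractVert h b ↔ a = b ∨ s(a, b) = s(T.src e0, T.tgt e0) := by
  unfold contractVert
  split_ifs <;> simp only [Sym2.eq_iff] <;> grind

lemma contractVert_eq_contractVert_iff_of_ne {a w : T.V} (hwu : w ≠ T.src e0)
    (hwv : w ≠ T.tgt e0) : contractVert h a = contractVert h w ↔ a = w := by
  rw [contractVert_eq_contractVert_iff, Sym2.eq_iff]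
  grind

lemma contractVert_eq_contractVert_src_iff {a : T.V} :
    contractVert h a = contractVert h (T.src e0) ↔ a = T.src e0 ∨ a = T.tgt e0 := by
  rw [contractVert_eq_contractVert_iff, Sym2.eq_iff]
  grind

lemma card_contract_fiber_of_ne (f : T.E → T.V) (hf : f e0 = T.src e0 ∨ f e0 = T.tgt e0)
    {w : T.V} (hwu : w ≠ T.src e0) (hwv : w ≠ T.tgt e0) :
    Nat.card {x : (T.contract e0 h).E // contractVert h (f x.1) = contractVert h w}
      = Nat.card {x // f x = w} := by
  simp_rw [contractVert_eq_contractVert_iff_of_ne h hwu hwv]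
  exact Nat.card_subtype_ne_of_not (p := (f · = w)) (by grind)

lemma card_contract_fiber_src (f : T.E → T.V) (hf : f e0 = T.src e0 ∨ f e0 = T.tgt e0) :
    Nat.card {x : (T.contract e0 h).E // contractVert h (f x.1) = contractVert h (T.src e0)} + 1
      = Nat.card {x // f x = T.src e0} + Nat.card {x // f x = T.tgt e0} := by
  simp_rw [contractVert_eq_contractVert_src_iff]
  calc _ = Nat.card {x // f x = T.src e0 ∨ f x = T.tgt e0} :=
        Nat.card_subtype_ne_add_one (p := fun x => f x = T.src e0 ∨ f x = T.tgt e0) hf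
    _ = _ := by
      classical
      rw [Nat.card_congr (subtypeOrEquiv _ _ ?_), Nat.card_sum]
      exact fun _ hu hv x hx => h ((hu x hx).symm.trans (hv x hx))

lemma degOut_contractVert_of_ne {w : T.V} (hwu : w ≠ T.src e0) (hwv : w ≠ T.tgt e0) :
    (T.contract e0 h).degOut (contractVert h w) = T.degOut w := by
  have hleg : (T.contract e0 h).legOut (contractVert h w) = T.legOut w := by
    simp [contract, contractVert, hwu, hwv]
  simp only [degOut, contract_src, hleg, card_contract_fiber_of_ne h T.src (.inl rfl) hwu hwv]

lemma degIn_contractVert_of_ne {w : T.V} (hwu : w ≠ T.src e0) (hwv : w ≠ T.tgt e0) :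
    (T.contract e0 h).degIn (contractVert h w) = T.degIn w := by
  have hleg : (T.contract e0 h).legIn (contractVert h w) = T.legIn w := by
    simp [contract, contractVert, hwu, hwv]
  simp only [degIn, contract_tgt, hleg, card_contract_fiber_of_ne h T.tgt (.inr rfl) hwu hwv]

lemma degOut_contractVert_src :
    (T.contract e0 h).degOut (contractVert h (T.src e0)) + 1
      = T.degOut (T.src e0) + T.degOut (T.tgt e0) := by
  have hleg : (T.contract e0 h).legOut (contractVert h (T.src e0))
      = T.legOut (T.src e0) + T.legOut (T.tgt e0) := by
    simp [contract, contractVert, h]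
  have := card_contract_fiber_src h T.src (.inl rfl)
  simp only [degOut, contract_src, hleg]
  omega

lemma degIn_contractVert_src :
    (T.contract e0 h).degIn (contractVert h (T.src e0)) + 1
      = T.degIn (T.src e0) + T.degIn (T.tgt e0) := by
  have hleg : (T.contract e0 h).legIn (contractVert h (T.src e0))
      = T.legIn (T.src e0) + T.legIn (T.tgt e0) := by
    simp [contract, contractVert, h]
  have := card_contract_fiber_src h T.tgt (.inr rfl)
  simp only [degIn, contract_tgt, hleg]
  omega

lemma contractVert_src_eq_contractVert_tgt_iff (hT : T.IsTree) {e : T.E} (he : e ≠ e0) :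
    contractVert h (T.src e) = contractVert h (T.tgt e) ↔ T.src e = T.tgt e := by
  rw [contractVert_eq_contractVert_iff, or_iff_left fun hends => he (hT.eq_of_sym2_eq hends)]

lemma degOut_contractVert_src_eq_one_iff (hss : T.Semistable) (hc : T.Contractible e0)
    {e : T.E} (he : e ≠ e0) :
    (T.contract e0 hc.1).degOut (contractVert hc.1 (T.src e)) = 1 ↔ T.degOut (T.src e) = 1 := by
  have hu := hss (T.src e0)
  have hv := hss (T.tgt e0)
  have hp := degOut_contractVert_src hc.1
  by_cases hsu : T.src e = T.src e0
  · have := one_lt_degOut_of_src_eq he hsu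
    rw [hsu]
    omega
  by_cases hsv : T.src e = T.tgt e0
  · rw [hsv, contractVert_tgt]
    rcases hc.2 with h1 | h1 <;> omega
  rw [degOut_contractVert_of_ne hc.1 hsu hsv]

lemma degIn_contractVert_tgt_eq_one_iff (hss : T.Semistable) (hc : T.Contractible e0)
    {e : T.E} (he : e ≠ e0) :
    (T.contract e0 hc.1).degIn (contractVert hc.1 (T.tgt e)) = 1 ↔ T.degIn (T.tgt e) = 1 := by
  have hu := hss (T.src e0)
  have hv := hss (T.tgt e0)
  have hp := degIn_contractVert_src hc.1
  by_cases htv : T.tgt e = T.tgt e0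
  · have := one_lt_degIn_of_tgt_eq he htv
    rw [htv, contractVert_tgt]
    omega
  by_cases htu : T.tgt e = T.src e0
  · rw [htu]
    rcases hc.2 with h1 | h1 <;> omega
  rw [degIn_contractVert_of_ne hc.1 htu htv]

end Contraction

end DecTree

/-- After contracting a contractible edge `e0` of a semistable decorated
tree, an edge `e ≠ e0` is contractible in the contracted tree iff it is contractible
in the original tree. -/
theorem contractible_iff_of_contract (T : DecTree) (hT : T.IsTree) (hss : T.Semistable)
    (e0 : T.E) (hc : T.Contractible e0) (e : T.E) (he : e ≠ e0) :
    (T.contract e0 hc.1).Contractible ⟨e, he⟩ ↔ T.Contractible e :=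
  and_congr (not_congr (DecTree.contractVert_src_eq_contractVert_tgt_iff hc.1 hT he))
    (or_congr (DecTree.degOut_contractVert_src_eq_one_iff hss hc he)
      (DecTree.degIn_contractVert_tgt_eq_one_iff hss hc he))
end

section
/- Let G be a semistable finite directed multigraph (every vertex v satisfies deg⁻(v) ≥ 1, deg⁺(v) ≥ 1, deg⁻(v)+deg⁺(v) ≥ 3, where loops contribute to both in- and out-degree) and let e = uv be a contractible edge of G (u ≠ v and deg⁺(u)=1 or deg⁻(v)=1). Let G' be the graph obtained by contracting e. If e' is an edge of G with e' ≠ e and e' is not an edge from v to u, then e' is contractible in G if and only if its image is contractible in G'. -/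
open Relation

structure MDigraph where
  V : Type
  E : Type
  [hV : Finite V]
  [hE : Finite E]
  src : E → V
  tgt : E → V

attribute [instance] MDigraph.hV MDigraph.hE

namespace MDigraph

noncomputable def degOut (G : MDigraph) (v : G.V) : ℕ := Nat.card {e : G.E // G.src e = v}
noncomputable def degIn (G : MDigraph) (v : G.V) : ℕ := Nat.card {e : G.E // G.tgt e = v}

def Semistable (G : MDigraph) : Prop :=
  ∀ v : G.V, 1 ≤ G.degIn v ∧ 1 ≤ G.degOut v ∧ 3 ≤ G.degIn v + G.degOut v

def Stable (G : MDigraph) : Prop :=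
  ∀ v : G.V, 2 ≤ G.degIn v ∧ 2 ≤ G.degOut v

def Contractible (G : MDigraph) (e : G.E) : Prop :=
  G.src e ≠ G.tgt e ∧ (G.degOut (G.src e) = 1 ∨ G.degIn (G.tgt e) = 1)

def mergeRel (G : MDigraph) (e0 : G.E) (a b : G.V) : Prop :=
  a = b ∨ ((a = G.src e0 ∨ a = G.tgt e0) ∧ (b = G.src e0 ∨ b = G.tgt e0))

def contract (G : MDigraph) (e0 : G.E) : MDigraph where
  V := Quot (G.mergeRel e0)
  E := {e : G.E // e ≠ e0}
  src e := Quot.mk _ (G.src e.1)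
  tgt e := Quot.mk _ (G.tgt e.1)

structure Iso (G H : MDigraph) where
  vEquiv : G.V ≃ H.V
  eEquiv : G.E ≃ H.E
  src_map : ∀ e, H.src (eEquiv e) = vEquiv (G.src e)
  tgt_map : ∀ e, H.tgt (eEquiv e) = vEquiv (G.tgt e)

def Adj (G : MDigraph) (a b : G.V) : Prop := ∃ e, G.src e = a ∧ G.tgt e = b

def Strong (G : MDigraph) : Prop := ∀ a b : G.V, ReflTransGen G.Adj a b

def ContractStep (G H : MDigraph) : Prop :=
  ∃ e0 : G.E, G.Contractible e0 ∧ Nonempty (Iso (G.contract e0) H)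

def IsStabilization (G H : MDigraph) : Prop :=
  ReflTransGen ContractStep G H ∧ H.Stable

def Stabilizable (G : MDigraph) : Prop := ∃ H, G.IsStabilization H

def IsLinear (G : MDigraph) (L : Set G.E) : Prop :=
  ∀ v : G.V, Nat.card {e : G.E // e ∈ L ∧ G.src e = v} = Nat.card {e : G.E // e ∈ L ∧ G.tgt e = v}
    ∧ Nat.card {e : G.E // e ∈ L ∧ G.src e = v} ≤ 1

def LAdj (G : MDigraph) (L : Set G.E) (a b : G.V) : Prop := ∃ e ∈ L, G.src e = a ∧ G.tgt e = b

def supp (G : MDigraph) (L : Set G.E) : Set G.V := {v | ∃ e ∈ L, G.src e = v ∨ G.tgt e = v}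

noncomputable def components (G : MDigraph) (L : Set G.E) : ℕ :=
  Nat.card (Quot (fun a b : G.supp L => G.LAdj L a.1 b.1))

noncomputable def adjMatrix (G : MDigraph) : Matrix G.V G.V ℤ :=
  Matrix.of fun a b => (Nat.card {e : G.E // G.src e = a ∧ G.tgt e = b} : ℤ)

open Classical in
noncomputable def detIA (G : MDigraph) : ℤ :=
  letI := Fintype.ofFinite G.V
  ((1 : Matrix G.V G.V ℤ) - G.adjMatrix).det

noncomputable def weight (G : MDigraph) : ℤ := (Nat.card G.E : ℤ) - (Nat.card G.V : ℤ)

noncomputable def numLinear (G : MDigraph) : ℕ := Nat.card {L : Set G.E // G.IsLinear L}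

end MDigraph

/-!
Write `u → v` for the contracted edge `e0` and `w` for the merged vertex. Contraction keeps the
degrees of all other vertices and gives `w` out-degree `deg⁺ u + deg⁺ v - 1` and in-degree
`deg⁻ u + deg⁻ v - 1`. Another edge out of `u` forces `deg⁺ u ≥ 2`, so no out-degree condition
holds there before or after; at `v`, semistability and contractibility of `e0` give
`deg⁺ v = 1 → deg⁺ u = 1`, so `deg⁺ w = 1 ↔ deg⁺ v = 1`. Dually for in-degrees. Finally an edge
becomes a loop only if it is parallel or antiparallel to `e0`, and parallel edges are excluded by
contractibility of `e0`.
-/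

namespace MDigraph

variable {G : MDigraph} {e0 : G.E}

lemma mergeRel_equivalence : Equivalence (G.mergeRel e0) where
  refl _ := Or.inl rfl
  symm := by
    rintro _ _ (rfl | ⟨ha, hb⟩)
    exacts [Or.inl rfl, Or.inr ⟨hb, ha⟩]
  trans := by
    rintro _ _ _ (rfl | ⟨ha, hb⟩) (rfl | ⟨hb', hc⟩)
    exacts [Or.inl rfl, Or.inr ⟨hb', hc⟩, Or.inr ⟨ha, hb⟩, Or.inr ⟨ha, hc⟩]

lemma mk_eq_mk_iff {a b : G.V} :
    Quot.mk (G.mergeRel e0) a = Quot.mk (G.mergeRel e0) b ↔ G.mergeRel e0 a b := by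
  rw [Quot.eq, mergeRel_equivalence.eqvGen_iff]

lemma mergeRel_iff_of_ne {a b : G.V} (hbu : b ≠ G.src e0) (hbv : b ≠ G.tgt e0) :
    G.mergeRel e0 a b ↔ a = b := by
  simp [mergeRel, hbu, hbv]

lemma mergeRel_iff_of_mem {a b : G.V} (hb : b = G.src e0 ∨ b = G.tgt e0) :
    G.mergeRel e0 a b ↔ a = G.src e0 ∨ a = G.tgt e0 := by
  unfold mergeRel
  constructor
  · rintro (rfl | ⟨ha, -⟩)
    exacts [hb, ha]
  · exact fun ha => Or.inr ⟨ha, hb⟩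

lemma mk_eq_mk_iff_of_not_parallel {a b : G.V} (hab : ¬(a = G.src e0 ∧ b = G.tgt e0))
    (hba : ¬(a = G.tgt e0 ∧ b = G.src e0)) :
    Quot.mk (G.mergeRel e0) a = Quot.mk (G.mergeRel e0) b ↔ a = b := by
  rw [mk_eq_mk_iff]
  refine ⟨?_, Or.inl⟩
  rintro (h | ⟨ha | ha, hb | hb⟩)
  exacts [h, ha.trans hb.symm, (hab ⟨ha, hb⟩).elim, (hba ⟨ha, hb⟩).elim, ha.trans hb.symm]

lemma card_contract_fiber_eq_ncard (f : G.E → G.V) (a : G.V) :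
    Nat.card {e : {e : G.E // e ≠ e0} // Quot.mk (G.mergeRel e0) (f e) = Quot.mk _ a}
      = ({e | G.mergeRel e0 (f e) a} \ {e0}).ncard := by
  rw [← Nat.card_coe_set_eq]
  exact Nat.card_congr
    { toFun x := ⟨x.1.1, mk_eq_mk_iff.mp x.2, x.1.2⟩
      invFun x := ⟨⟨x.1, x.2.2⟩, mk_eq_mk_iff.mpr x.2.1⟩
      left_inv _ := rfl
      right_inv _ := rfl }

lemma card_contract_fiber_of_ne (f : G.E → G.V) (hf : f e0 = G.src e0 ∨ f e0 = G.tgt e0)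
    {a : G.V} (hau : a ≠ G.src e0) (hav : a ≠ G.tgt e0) :
    Nat.card {e : {e : G.E // e ≠ e0} // Quot.mk (G.mergeRel e0) (f e) = Quot.mk _ a}
      = Nat.card {e // f e = a} := by
  have hset : {e | G.mergeRel e0 (f e) a} = f ⁻¹' {a} := by
    ext; simp [mergeRel_iff_of_ne hau hav]
  have he0 : e0 ∉ f ⁻¹' {a} := by
    rcases hf with h | h <;> simp [h, hau.symm, hav.symm]
  rw [card_contract_fiber_eq_ncard, hset, Set.sdiff_singleton_eq_self he0]
  rfl

lemma card_contract_fiber_add_one (f : G.E → G.V) (hf : f e0 = G.src e0 ∨ f e0 = G.tgt e0)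
    (huv : G.src e0 ≠ G.tgt e0) {a : G.V} (ha : a = G.src e0 ∨ a = G.tgt e0) :
    Nat.card {e : {e : G.E // e ≠ e0} // Quot.mk (G.mergeRel e0) (f e) = Quot.mk _ a} + 1
      = Nat.card {e // f e = G.src e0} + Nat.card {e // f e = G.tgt e0} := by
  have hset : {e | G.mergeRel e0 (f e) a} = f ⁻¹' {G.src e0} ∪ f ⁻¹' {G.tgt e0} := by
    ext; simp [mergeRel_iff_of_mem ha]
  have hdisj : Disjoint (f ⁻¹' {G.src e0}) (f ⁻¹' {G.tgt e0}) :=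
    (Set.disjoint_singleton.mpr huv).preimage f
  rw [card_contract_fiber_eq_ncard, hset, Set.ncard_sdiff_singleton_add_one (by simpa using hf),
    Set.ncard_union_eq hdisj]
  rfl

lemma contractible_contract_iff {e : G.E} (hne : e ≠ e0) :
    (G.contract e0).Contractible ⟨e, hne⟩ ↔
      Quot.mk (G.mergeRel e0) (G.src e) ≠ Quot.mk _ (G.tgt e) ∧
        ((G.contract e0).degOut (Quot.mk _ (G.src e)) = 1 ∨
          (G.contract e0).degIn (Quot.mk _ (G.tgt e)) = 1) :=
  Iff.rfl

lemma degOut_contract_mk_of_ne {a : G.V} (hau : a ≠ G.src e0) (hav : a ≠ G.tgt e0) :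
    (G.contract e0).degOut (Quot.mk _ a) = G.degOut a :=
  card_contract_fiber_of_ne G.src (Or.inl rfl) hau hav

lemma degIn_contract_mk_of_ne {a : G.V} (hau : a ≠ G.src e0) (hav : a ≠ G.tgt e0) :
    (G.contract e0).degIn (Quot.mk _ a) = G.degIn a :=
  card_contract_fiber_of_ne G.tgt (Or.inr rfl) hau hav

lemma degOut_contract_mk_add_one (huv : G.src e0 ≠ G.tgt e0) {a : G.V}
    (ha : a = G.src e0 ∨ a = G.tgt e0) :
    (G.contract e0).degOut (Quot.mk _ a) + 1 = G.degOut (G.src e0) + G.degOut (G.tgt e0) :=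
  card_contract_fiber_add_one G.src (Or.inl rfl) huv ha

lemma degIn_contract_mk_add_one (huv : G.src e0 ≠ G.tgt e0) {a : G.V}
    (ha : a = G.src e0 ∨ a = G.tgt e0) :
    (G.contract e0).degIn (Quot.mk _ a) + 1 = G.degIn (G.src e0) + G.degIn (G.tgt e0) :=
  card_contract_fiber_add_one G.tgt (Or.inr rfl) huv ha

lemma two_le_degOut {e e' : G.E} (hne : e ≠ e') (h : G.src e = G.src e') :
    2 ≤ G.degOut (G.src e') :=
  Finite.one_lt_card_iff_nontrivial.mpr ⟨⟨e, h⟩, ⟨e', rfl⟩, by simpa using hne⟩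

lemma two_le_degIn {e e' : G.E} (hne : e ≠ e') (h : G.tgt e = G.tgt e') :
    2 ≤ G.degIn (G.tgt e') :=
  Finite.one_lt_card_iff_nontrivial.mpr ⟨⟨e, h⟩, ⟨e', rfl⟩, by simpa using hne⟩

lemma Contractible.not_parallel (hc : G.Contractible e0) {e : G.E} (hne : e ≠ e0) :
    ¬(G.src e = G.src e0 ∧ G.tgt e = G.tgt e0) := by
  rintro ⟨hs, ht⟩
  have := hc.2
  have := two_le_degOut hne hs
  have := two_le_degIn hne ht
  omega

lemma Semistable.degOut_src_eq_one (hG : G.Semistable) (hc : G.Contractible e0)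
    (h : G.degOut (G.tgt e0) = 1) : G.degOut (G.src e0) = 1 := by
  have := hG (G.tgt e0)
  have := hc.2
  omega

lemma Semistable.degIn_tgt_eq_one (hG : G.Semistable) (hc : G.Contractible e0)
    (h : G.degIn (G.src e0) = 1) : G.degIn (G.tgt e0) = 1 := by
  have := hG (G.src e0)
  have := hc.2
  omega

lemma degOut_contract_src_eq_one_iff (hG : G.Semistable) (hc : G.Contractible e0) {e : G.E}
    (hne : e ≠ e0) :
    (G.contract e0).degOut (Quot.mk _ (G.src e)) = 1 ↔ G.degOut (G.src e) = 1 := by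
  by_cases hu : G.src e = G.src e0
  · have hmerge := degOut_contract_mk_add_one hc.1 (Or.inl hu)
    have := two_le_degOut hne hu
    have := (hG (G.tgt e0)).2.1
    rw [hu] at hmerge ⊢
    omega
  by_cases hv : G.src e = G.tgt e0
  · have hmerge := degOut_contract_mk_add_one hc.1 (Or.inr hv)
    have := (hG (G.src e0)).2.1
    have := (hG (G.tgt e0)).2.1
    rw [hv] at hmerge ⊢
    refine ⟨by omega, fun h => ?_⟩
    have := hG.degOut_src_eq_one hc h
    omega
  exact congrArg (· = 1) (degOut_contract_mk_of_ne hu hv) |>.to_iff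

lemma degIn_contract_tgt_eq_one_iff (hG : G.Semistable) (hc : G.Contractible e0) {e : G.E}
    (hne : e ≠ e0) :
    (G.contract e0).degIn (Quot.mk _ (G.tgt e)) = 1 ↔ G.degIn (G.tgt e) = 1 := by
  by_cases hv : G.tgt e = G.tgt e0
  · have hmerge := degIn_contract_mk_add_one hc.1 (Or.inr hv)
    have := two_le_degIn hne hv
    have := (hG (G.src e0)).1
    rw [hv] at hmerge ⊢
    omega
  by_cases hu : G.tgt e = G.src e0
  · have hmerge := degIn_contract_mk_add_one hc.1 (Or.inl hu)
    have := (hG (G.src e0)).1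
    have := (hG (G.tgt e0)).1
    rw [hu] at hmerge ⊢
    refine ⟨by omega, fun h => ?_⟩
    have := hG.degIn_tgt_eq_one hc h
    omega
  exact congrArg (· = 1) (degIn_contract_mk_of_ne hu hv) |>.to_iff

end MDigraph

open MDigraph in
/-- For a semistable graph `G` and a contractible edge `e0`, an edge
`e' ≠ e0` that is not an edge from `tgt e0` to `src e0` is contractible in `G`
iff its image is contractible in the contracted graph. -/
theorem contractible_iff_contractible_contract (G : MDigraph) (hG : G.Semistable)
    (e0 : G.E) (hc : G.Contractible e0) (e' : G.E) (hne : e' ≠ e0)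
    (hrev : ¬ (G.src e' = G.tgt e0 ∧ G.tgt e' = G.src e0)) :
    G.Contractible e' ↔ (G.contract e0).Contractible ⟨e', hne⟩ := by
  rw [contractible_contract_iff, ne_eq, mk_eq_mk_iff_of_not_parallel (hc.not_parallel hne) hrev,
    degOut_contract_src_eq_one_iff hG hc hne, degIn_contract_tgt_eq_one_iff hG hc hne]
  rfl
end

section
/- Every strongly connected semistable directed multigraph G is stabilizable; that is, by contracting finitely many contractible edges one obtains a stable graph (every vertex has in-degree ≥ 2 and out-degree ≥ 2). -/
open Relation

noncomputable example (G : MDigraph) (C : ℤ) : ℤ := ∑ᶠ L : {L : Set G.E // G.IsLinear L}, C ^ G.components L.1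

namespace MDigraph

-- aux lemmas
lemma mergeRel_equiv (G : MDigraph) (e0 : G.E) : Equivalence (G.mergeRel e0) := by
  constructor
  · exact fun a => Or.inl rfl
  · rintro a b (rfl | ⟨h1, h2⟩)
    · exact Or.inl rfl
    · exact Or.inr ⟨h2, h1⟩
  · rintro a b c (rfl | ⟨h1, h2⟩) hbc
    · exact hbc
    · rcases hbc with rfl | ⟨h3, h4⟩
      · exact Or.inr ⟨h1, h2⟩
      · exact Or.inr ⟨h1, h4⟩

lemma mk_eq_mk {G : MDigraph} {e0 : G.E} {a b : G.V} :
    Quot.mk (G.mergeRel e0) a = Quot.mk (G.mergeRel e0) b ↔ G.mergeRel e0 a b := by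
  rw [Quot.eq]
  exact (mergeRel_equiv G e0).eqvGen_iff

lemma degIn_le_contract (G : MDigraph) (e0 : G.E) (a : G.V) (ha : G.tgt e0 ≠ a) :
    G.degIn a ≤ (G.contract e0).degIn (Quot.mk _ a) := by
  apply Nat.card_le_card_of_injective
    (fun e => (⟨⟨e.1, fun h => ha (h ▸ e.2)⟩, congrArg (Quot.mk (G.mergeRel e0)) e.2⟩ :
      {e : (G.contract e0).E // (G.contract e0).tgt e = Quot.mk _ a}))
  intro x y h
  exact Subtype.ext (congrArg (fun z => z.1.1) h)

lemma degOut_le_contract (G : MDigraph) (e0 : G.E) (a : G.V) (ha : G.src e0 ≠ a) :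
    G.degOut a ≤ (G.contract e0).degOut (Quot.mk _ a) := by
  apply Nat.card_le_card_of_injective
    (fun e => (⟨⟨e.1, fun h => ha (h ▸ e.2)⟩, congrArg (Quot.mk (G.mergeRel e0)) e.2⟩ :
      {e : (G.contract e0).E // (G.contract e0).src e = Quot.mk _ a}))
  intro x y h
  exact Subtype.ext (congrArg (fun z => z.1.1) h)



lemma mk_src_eq_mk_tgt (G : MDigraph) (e0 : G.E) :
    Quot.mk (G.mergeRel e0) (G.src e0) = Quot.mk (G.mergeRel e0) (G.tgt e0) :=
  Quot.sound (Or.inr ⟨Or.inl rfl, Or.inr rfl⟩)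

lemma contract_semistable (G : MDigraph) (h1 : G.Semistable) (e0 : G.E)
    (hc : G.Contractible e0) : (G.contract e0).Semistable := by
  obtain ⟨hne, hd⟩ := hc
  intro v'
  induction v' using Quot.ind with
  | _ a =>
    have hIs := G.degIn_le_contract e0 (G.src e0) (fun h => hne h.symm)
    have hOt := G.degOut_le_contract e0 (G.tgt e0) hne
    rw [G.mk_src_eq_mk_tgt e0] at hIs
    by_cases has : a = G.src e0 ∨ a = G.tgt e0
    · have hmk : Quot.mk (G.mergeRel e0) a = Quot.mk (G.mergeRel e0) (G.tgt e0) := by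
        rcases has with rfl | rfl
        · exact G.mk_src_eq_mk_tgt e0
        · rfl
      rw [hmk]
      obtain ⟨hs1, hs2, hs3⟩ := h1 (G.src e0)
      obtain ⟨ht1, ht2, ht3⟩ := h1 (G.tgt e0)
      rcases hd with hd | hd <;> omega
    · push_neg at has
      have hIa := G.degIn_le_contract e0 a (fun h => has.2 h.symm)
      have hOa := G.degOut_le_contract e0 a (fun h => has.1 h.symm)
      obtain ⟨ha1, ha2, ha3⟩ := h1 a
      omega

lemma contract_strong (G : MDigraph) (h2 : G.Strong) (e0 : G.E) :
    (G.contract e0).Strong := by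
  have key : ∀ a b : G.V, ReflTransGen G.Adj a b →
      ReflTransGen (G.contract e0).Adj (Quot.mk _ a) (Quot.mk _ b) := by
    intro a b h
    induction h with
    | refl => exact ReflTransGen.refl
    | tail _ hbc ih =>
      obtain ⟨e, he1, he2⟩ := hbc
      by_cases he : e = e0
      · subst he
        have : Quot.mk (G.mergeRel e) (G.src e) = Quot.mk (G.mergeRel e) (G.tgt e) :=
          G.mk_src_eq_mk_tgt e
        rw [← he2, ← this, he1]
        exact ih
      · exact ih.tail ⟨⟨e, he⟩, congrArg (Quot.mk _) he1, congrArg (Quot.mk _) he2⟩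
  intro a' b'
  induction a' using Quot.ind with
  | _ a =>
    induction b' using Quot.ind with
    | _ b => exact key a b (h2 a b)

lemma card_contract_lt (G : MDigraph) (e0 : G.E) (hne : G.src e0 ≠ G.tgt e0) :
    Nat.card (G.contract e0).V < Nat.card G.V := by
  have hsurj : Function.Surjective (Quot.mk (G.mergeRel e0)) := Quot.mk_surjective
  have hle := Nat.card_le_card_of_surjective _ hsurj
  rcases lt_or_eq_of_le hle with h | h
  · exact h
  · exfalso
    have hbij := hsurj.bijective_of_nat_card_le (le_of_eq h.symm)
    exact hne (hbij.injective (G.mk_src_eq_mk_tgt e0))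

lemma exists_in_edge (G : MDigraph) (u v : G.V) (h : ReflTransGen G.Adj u v) :
    u ≠ v → ∃ e, G.tgt e = v ∧ G.src e ≠ v := by
  induction h with
  | refl => exact fun hne => absurd rfl hne
  | @tail b c _ hbc ih =>
    intro hne
    by_cases hb : b = c
    · subst hb; exact ih hne
    · obtain ⟨e, h1, h2⟩ := hbc
      exact ⟨e, h2, fun hh => hb ((h1.symm.trans hh))⟩

lemma exists_out_edge (G : MDigraph) (u v : G.V) (h : ReflTransGen G.Adj v u) :
    u ≠ v → ∃ e, G.src e = v ∧ G.tgt e ≠ v := by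
  induction h using ReflTransGen.head_induction_on with
  | refl => exact fun hne => absurd rfl hne
  | @head b c hbc _ ih =>
    intro hne
    by_cases hb : c = b
    · subst hb; exact ih hne
    · obtain ⟨e, h1, h2⟩ := hbc
      exact ⟨e, h1, fun hh => hb ((h2.symm.trans hh))⟩



lemma exists_contractible (G : MDigraph) (h1 : G.Semistable) (h2 : G.Strong)
    (hns : ¬ G.Stable) : ∃ e0, G.Contractible e0 := by
  unfold Stable at hns
  push_neg at hns
  obtain ⟨v, hv⟩ := hns
  obtain ⟨hv1, hv2, hv3⟩ := h1 v
  have hall : (∀ u : G.V, u = v) → False := by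
    intro hex
    have hIn : G.degIn v = Nat.card G.E :=
      Nat.card_congr ⟨Subtype.val, fun e => ⟨e, hex _⟩, fun _ => rfl, fun _ => rfl⟩
    have hOut : G.degOut v = Nat.card G.E :=
      Nat.card_congr ⟨Subtype.val, fun e => ⟨e, hex _⟩, fun _ => rfl, fun _ => rfl⟩
    have h2le : 2 ≤ G.degIn v ∧ 2 ≤ G.degOut v := by constructor <;> omega
    have := hv h2le.1; omega
  by_cases hin : 2 ≤ G.degIn v
  · -- then degOut v = 1
    have hout : G.degOut v = 1 := by have := hv hin; omega
    have hsub : Subsingleton {e : G.E // G.src e = v} :=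
      (Nat.card_eq_one_iff_unique.mp hout).1
    have hne : Nonempty {e : G.E // G.src e = v} :=
      (Nat.card_eq_one_iff_unique.mp hout).2
    obtain ⟨e0, he0⟩ := hne
    refine ⟨e0, ?_, Or.inl (by rw [he0]; exact hout)⟩
    rw [he0]
    intro heq
    by_cases hex : ∃ u : G.V, u ≠ v
    · obtain ⟨u, hu⟩ := hex
      obtain ⟨e, hesrc, hetgt⟩ := G.exists_out_edge u v (h2 v u) hu
      have : (⟨e, hesrc⟩ : {e : G.E // G.src e = v}) = ⟨e0, he0⟩ := Subsingleton.elim _ _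
      exact hetgt (by rw [Subtype.mk.injEq] at this; rw [this]; exact heq.symm)
    · push_neg at hex
      exact hall hex
  · have hin' : G.degIn v = 1 := by omega
    have hsub : Subsingleton {e : G.E // G.tgt e = v} :=
      (Nat.card_eq_one_iff_unique.mp hin').1
    have hne : Nonempty {e : G.E // G.tgt e = v} :=
      (Nat.card_eq_one_iff_unique.mp hin').2
    obtain ⟨e0, he0⟩ := hne
    refine ⟨e0, ?_, Or.inr (by rw [he0]; exact hin')⟩
    rw [he0]
    intro heq
    by_cases hex : ∃ u : G.V, u ≠ v
    · obtain ⟨u, hu⟩ := hex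
      obtain ⟨e, hetgt, hesrc⟩ := G.exists_in_edge u v (h2 u v) hu
      have : (⟨e, hetgt⟩ : {e : G.E // G.tgt e = v}) = ⟨e0, he0⟩ := Subsingleton.elim _ _
      exact hesrc (by rw [Subtype.mk.injEq] at this; rw [this]; exact heq)
    · push_neg at hex
      exact hall hex

lemma aux_main : ∀ n : ℕ, ∀ G : MDigraph, Nat.card G.V ≤ n → G.Semistable → G.Strong →
    G.Stabilizable := by
  intro n
  induction n with
  | zero =>
    intro G hcard h1 h2
    refine ⟨G, ReflTransGen.refl, fun v => ?_⟩
    have : 0 < Nat.card G.V := Nat.card_pos_iff.mpr ⟨⟨v⟩, inferInstance⟩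
    omega
  | succ n ih =>
    intro G hcard h1 h2
    by_cases hst : G.Stable
    · exact ⟨G, ReflTransGen.refl, hst⟩
    obtain ⟨e0, hc⟩ := exists_contractible G h1 h2 hst
    have hlt := G.card_contract_lt e0 hc.1
    obtain ⟨H, hH1, hH2⟩ := ih (G.contract e0) (by omega)
      (G.contract_semistable h1 e0 hc) (G.contract_strong h2 e0)
    exact ⟨H, ReflTransGen.head
      ⟨e0, hc, ⟨⟨Equiv.refl _, Equiv.refl _, fun _ => rfl, fun _ => rfl⟩⟩⟩ hH1, hH2⟩

end MDigraph

/-- Every strongly connected semistable directed multigraph is stabilizable. -/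
theorem strong_semistable_stabilizable (G : MDigraph) (h1 : G.Semistable) (h2 : G.Strong) :
    G.Stabilizable := by
  exact MDigraph.aux_main (Nat.card G.V) G le_rfl h1 h2
end

section
/- If v is a nonstable vertex of a strongly connected semistable directed multigraph G with at least two vertices, then v has no loop, and v has either a unique inward edge or a unique outward edge, which is a contractible edge of G. -/
open Relation

noncomputable example (G : MDigraph) (C : ℤ) : ℤ := ∑ᶠ L : {L : Set G.E // G.IsLinear L}, C ^ G.components L.1

/-- A nonstable vertex of a strongly connected semistable multigraph with at
least two vertices has no loop, and has either a unique inward or a unique outward edge,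
which is contractible. -/
theorem nonstable_vertex_structure (G : MDigraph) (hss : G.Semistable) (hs : G.Strong)
    (hcard : 2 ≤ Nat.card G.V) (v : G.V) (hv : ¬ (2 ≤ G.degIn v ∧ 2 ≤ G.degOut v)) :
    (∀ e : G.E, ¬ (G.src e = v ∧ G.tgt e = v)) ∧
    ((∃ e : G.E, G.tgt e = v ∧ (∀ e' : G.E, G.tgt e' = v → e' = e) ∧ G.Contractible e) ∨
     (∃ e : G.E, G.src e = v ∧ (∀ e' : G.E, G.src e' = v → e' = e) ∧ G.Contractible e)) := by
  obtain ⟨h1, h2, h3⟩ := hss v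
  obtain ⟨u, hu⟩ : ∃ u : G.V, u ≠ v := by
    by_contra h
    push_neg at h
    have := Nat.card_eq_one_iff_exists.mpr ⟨v, h⟩
    omega
  have hcase : G.degIn v = 1 ∨ G.degOut v = 1 := by omega
  rcases hcase with hin | hout
  · obtain ⟨⟨e, hte⟩, huniq⟩ := Nat.card_eq_one_iff_exists.mp hin
    have euniq : ∀ e' : G.E, G.tgt e' = v → e' = e := fun e' h' =>
      congrArg Subtype.val (huniq ⟨e', h'⟩)
    have hnoloop : G.src e ≠ v := by
      intro hse
      have key : ∀ a b : G.V, ReflTransGen G.Adj a b → b = v → a = v := by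
        intro a b hab
        induction hab with
        | refl => exact fun h => h
        | tail hab hbc ih =>
          intro hc
          subst hc
          obtain ⟨e', hse', hte'⟩ := hbc
          have he' := euniq e' hte'
          subst he'
          exact ih (hse'.symm.trans hse)
      exact hu (key u v (hs u v) rfl)
    refine ⟨fun e'' ⟨hs'', ht''⟩ => hnoloop ((euniq e'' ht'') ▸ hs''), Or.inl ⟨e, hte, euniq,
      ⟨fun h => hnoloop (h.trans hte), Or.inr (hte ▸ hin)⟩⟩⟩
  · obtain ⟨⟨e, hse⟩, huniq⟩ := Nat.card_eq_one_iff_exists.mp hout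
    have euniq : ∀ e' : G.E, G.src e' = v → e' = e := fun e' h' =>
      congrArg Subtype.val (huniq ⟨e', h'⟩)
    have hnoloop : G.tgt e ≠ v := by
      intro hte
      have key : ∀ a b : G.V, ReflTransGen G.Adj a b → a = v → b = v := by
        intro a b hab
        induction hab with
        | refl => exact fun h => h
        | tail hab hbc ih =>
          intro ha
          have hb := ih ha
          subst hb
          obtain ⟨e', hse', hte'⟩ := hbc
          have he' := euniq e' hse'
          subst he'
          exact hte'.symm.trans hte
      exact hu (key v u (hs v u) rfl).symm.symm
    refine ⟨fun e'' ⟨hs'', ht''⟩ => hnoloop ((euniq e'' hs'') ▸ ht''), Or.inr ⟨e, hse, euniq,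
      ⟨fun h => hnoloop (hse ▸ h.symm ▸ rfl), Or.inl (hse ▸ hout)⟩⟩⟩
end

section
/- Let Γ be a semistable pointed directed multigraph such that every edge of Γ is non-contractible and Γ is non-stabilizable. If v is an ordinary vertex with total degree 3 (strictly semistable), then v carries a self-loop. Consequently, if Γ is a non-stabilizable semistable pointed graph then det(I − A(Γ₋)) = 0, where Γ₋ is Γ with the distinguished vertex removed. -/
open Relation

/-- A pointed finite directed multigraph: a digraph with a distinguished vertex. -/
structure PGraph where
  V : Type
  E : Type
  [hV : Finite V]
  [hE : Finite E]
  src : E → V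
  tgt : E → V
  base : V

attribute [instance] PGraph.hV PGraph.hE

namespace PGraph

noncomputable def degOut (G : PGraph) (v : G.V) : ℕ := Nat.card {e : G.E // G.src e = v}
noncomputable def degIn (G : PGraph) (v : G.V) : ℕ := Nat.card {e : G.E // G.tgt e = v}

/-- Semistability, required only of ordinary (non-distinguished) vertices. -/
def Semistable (G : PGraph) : Prop :=
  ∀ v : G.V, v ≠ G.base → 1 ≤ G.degIn v ∧ 1 ≤ G.degOut v ∧ 3 ≤ G.degIn v + G.degOut v

/-- Stability, required only of ordinary vertices. -/
def Stable (G : PGraph) : Prop :=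
  ∀ v : G.V, v ≠ G.base → 2 ≤ G.degIn v ∧ 2 ≤ G.degOut v

/-- An edge `uv` is contractible if `u ≠ v` and either `u` is ordinary with out-degree 1,
or `v` is ordinary with in-degree 1. -/
def Contractible (G : PGraph) (e : G.E) : Prop :=
  G.src e ≠ G.tgt e ∧
    ((G.src e ≠ G.base ∧ G.degOut (G.src e) = 1) ∨
     (G.tgt e ≠ G.base ∧ G.degIn (G.tgt e) = 1))

def mergeRel (G : PGraph) (e0 : G.E) (a b : G.V) : Prop :=
  a = b ∨ ((a = G.src e0 ∨ a = G.tgt e0) ∧ (b = G.src e0 ∨ b = G.tgt e0))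

/-- Contract the edge `e0`, merging its two endpoints. -/
def contract (G : PGraph) (e0 : G.E) : PGraph where
  V := Quot (G.mergeRel e0)
  E := {e : G.E // e ≠ e0}
  src e := Quot.mk _ (G.src e.1)
  tgt e := Quot.mk _ (G.tgt e.1)
  base := Quot.mk _ G.base

/-- Isomorphism of pointed graphs. -/
structure Iso (G H : PGraph) where
  vEquiv : G.V ≃ H.V
  eEquiv : G.E ≃ H.E
  src_map : ∀ e, H.src (eEquiv e) = vEquiv (G.src e)
  tgt_map : ∀ e, H.tgt (eEquiv e) = vEquiv (G.tgt e)
  base_map : vEquiv G.base = H.base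

def Adj (G : PGraph) (a b : G.V) : Prop := ∃ e, G.src e = a ∧ G.tgt e = b

def Strong (G : PGraph) : Prop := ∀ a b : G.V, ReflTransGen G.Adj a b

def ContractStep (G H : PGraph) : Prop :=
  ∃ e0 : G.E, G.Contractible e0 ∧ Nonempty (Iso (G.contract e0) H)

def IsStabilization (G H : PGraph) : Prop :=
  ReflTransGen ContractStep G H ∧ H.Stable

def Stabilizable (G : PGraph) : Prop := ∃ H, G.IsStabilization H

open Classical in
/-- The determinant det(I − A(Γ₋)), where Γ₋ is the graph on the ordinary vertices. -/
noncomputable def detIAminus (G : PGraph) : ℤ :=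
  letI := Fintype.ofFinite {v : G.V // v ≠ G.base}
  ((1 : Matrix {v : G.V // v ≠ G.base} {v : G.V // v ≠ G.base} ℤ) -
    Matrix.of fun a b : {v : G.V // v ≠ G.base} =>
      (Nat.card {e : G.E // G.src e = a.1 ∧ G.tgt e = b.1} : ℤ)).det

end PGraph

/-!
At a strictly semistable ordinary vertex one of the two degrees is `1`, and the edge realizing it
must be a loop, as it would otherwise be contractible.

For the determinant: contracting an edge `uw` whose source `u` is ordinary of out-degree one does
not change `det (I - A(Γ₋))`: row `u` of `I - A` is `eᵤ - e_w` (or `eᵤ` if `w` is the distinguished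
vertex), and Gaussian elimination with the pivot `1` at `(u, u)` yields exactly the matrix of the
contracted graph, whose entry `(x, y)` counts the edges `x → y` and the paths `x → u → y`.
In-degree one is the same statement for the reversed graph. Contracting as long as possible, a non-stabilizable graph ends at
one without contractible edges that is not stable, so some ordinary vertex has in- or out-degree
one, carried by a loop. Its column or row of `I - A` then vanishes.
-/

namespace Matrix

variable {ι R : Type*} [Fintype ι] [DecidableEq ι] [CommRing R]

theorem det_eq_det_pivot (M : Matrix ι ι R) (i : ι) (hi : M i i = 1) :
    M.det = (of fun x y : {j // j ≠ i} => M x y - M x i * M i y).det := by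
  let e : {j // j = i} ⊕ {j // j ≠ i} ≃ ι := Equiv.sumCompl (· = i)
  have hpivot : (M.submatrix e e).toBlocks₁₁ = 1 := by
    ext ⟨a, rfl⟩ ⟨b, rfl⟩
    simpa [toBlocks₁₁, e] using hi
  rw [← det_submatrix_equiv_self e M, ← fromBlocks_toBlocks (M.submatrix e e), hpivot,
    det_fromBlocks_one₁₁]
  congr 1
  ext x y
  have hdefault : ((default : {j // j = i}) : ι) = i := (default : {j // j = i}).2
  simp [toBlocks₂₂, toBlocks₂₁, toBlocks₁₂, mul_apply, e, hdefault]

end Matrix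

theorem Nat.card_subtype_or_of_disjoint {α : Type*} [Finite α] {p q : α → Prop}
    (h : ∀ a, p a → q a → False) :
    Nat.card {a // p a ∨ q a} = Nat.card {a // p a} + Nat.card {a // q a} := by
  classical
  rw [Nat.card_congr (subtypeOrEquiv p q fun _ hp hq a ha => (h a (hp a ha) (hq a ha)).elim),
    Nat.card_sum]

open scoped Matrix

namespace PGraph

variable {G : PGraph}

noncomputable def edgeCount (G : PGraph) (a b : G.V) : ℕ :=
  Nat.card {e : G.E // G.src e = a ∧ G.tgt e = b}

noncomputable def adjMatrix (G : PGraph) :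
    Matrix {v : G.V // v ≠ G.base} {v : G.V // v ≠ G.base} ℤ :=
  Matrix.of fun a b => (G.edgeCount a b : ℤ)

theorem detIAminus_eq [Fintype {v : G.V // v ≠ G.base}] [DecidableEq {v : G.V // v ≠ G.base}] :
    G.detIAminus = (1 - G.adjMatrix).det := by
  unfold detIAminus adjMatrix edgeCount
  congr!

theorem one_sub_adjMatrix_apply [DecidableEq {v : G.V // v ≠ G.base}]
    (a b : {v : G.V // v ≠ G.base}) :
    (1 - G.adjMatrix) a b = (if a = b then 1 else 0) - G.edgeCount a b := by
  simp [adjMatrix, Matrix.one_apply]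

theorem one_le_degOut_iff {v : G.V} : 1 ≤ G.degOut v ↔ ∃ e, G.src e = v := by
  simp [degOut, Nat.one_le_iff_ne_zero, Nat.card_ne_zero, Subtype.finite]

theorem one_le_degIn_iff {v : G.V} : 1 ≤ G.degIn v ↔ ∃ e, G.tgt e = v := by
  simp [degIn, Nat.one_le_iff_ne_zero, Nat.card_ne_zero, Subtype.finite]

theorem eq_of_degOut_eq_one {e e' : G.E} (h : G.degOut (G.src e) = 1)
    (he' : G.src e' = G.src e) : e' = e := by
  have := (Nat.card_eq_one_iff_unique.mp h).1
  exact congrArg Subtype.val (Subsingleton.elim (⟨e', he'⟩ : {x // G.src x = G.src e}) ⟨e, rfl⟩)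

theorem edgeCount_src_tgt_of_degOut_eq_one {e : G.E} (h : G.degOut (G.src e) = 1) :
    G.edgeCount (G.src e) (G.tgt e) = 1 := by
  rw [edgeCount, Nat.card_eq_one_iff_exists]
  exact ⟨⟨e, rfl, rfl⟩, fun e' => Subtype.ext (eq_of_degOut_eq_one h e'.2.1)⟩

theorem edgeCount_src_eq_zero_of_degOut_eq_one {e : G.E} (h : G.degOut (G.src e) = 1) {b : G.V}
    (hb : b ≠ G.tgt e) : G.edgeCount (G.src e) b = 0 := by
  rw [edgeCount, Nat.card_eq_zero]
  refine Or.inl ⟨fun ⟨e', hs, ht⟩ => hb ?_⟩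
  rw [← ht, eq_of_degOut_eq_one h hs]

-- Reducible, so that instances on the ordinary vertices of `G` serve for `G.rev` as well.
abbrev rev (G : PGraph) : PGraph where
  V := G.V
  E := G.E
  src := G.tgt
  tgt := G.src
  base := G.base

theorem rev_contractible {e : G.E} : G.rev.Contractible e ↔ G.Contractible e := by
  unfold Contractible
  exact and_congr ne_comm or_comm

theorem rev_edgeCount (a b : G.V) : G.rev.edgeCount a b = G.edgeCount b a :=
  Nat.card_congr (Equiv.subtypeEquivRight fun _ => and_comm)

theorem detIAminus_rev : G.rev.detIAminus = G.detIAminus := by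
  classical
  let := Fintype.ofFinite {v : G.V // v ≠ G.base}
  have hadj : G.rev.adjMatrix = G.adjMatrixᵀ := by
    ext a b
    exact congrArg Nat.cast (rev_edgeCount (G := G) a.1 b.1)
  rw [detIAminus_eq, detIAminus_eq, hadj, ← Matrix.det_transpose (1 - G.adjMatrix),
    Matrix.transpose_sub, Matrix.transpose_one]

theorem rev_contract (e0 : G.E) : G.rev.contract e0 = (G.contract e0).rev := by
  have hrel : G.rev.mergeRel e0 = G.mergeRel e0 := by
    funext a b
    exact propext (or_congr_right (and_congr or_comm or_comm))
  show PGraph.mk (Quot (G.rev.mergeRel e0)) _ _ _ _ = _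
  rw [hrel]
  rfl

theorem src_eq_tgt_of_degOut_eq_one {e : G.E} (hnc : ¬ G.Contractible e)
    (hv : G.src e ≠ G.base) (h : G.degOut (G.src e) = 1) : G.src e = G.tgt e :=
  not_not.mp fun hne => hnc ⟨hne, Or.inl ⟨hv, h⟩⟩

theorem src_eq_tgt_of_degIn_eq_one {e : G.E} (hnc : ¬ G.Contractible e)
    (hv : G.tgt e ≠ G.base) (h : G.degIn (G.tgt e) = 1) : G.src e = G.tgt e :=
  not_not.mp fun hne => hnc ⟨hne, Or.inr ⟨hv, h⟩⟩

theorem exists_loop_of_degOut_eq_one (hnc : ∀ e, ¬ G.Contractible e) {v : G.V}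
    (hv : v ≠ G.base) (h : G.degOut v = 1) : ∃ e, G.src e = v ∧ G.tgt e = v := by
  obtain ⟨e, rfl⟩ := one_le_degOut_iff.mp h.ge
  exact ⟨e, rfl, (src_eq_tgt_of_degOut_eq_one (hnc e) hv h).symm⟩

theorem exists_loop_of_degIn_eq_one (hnc : ∀ e, ¬ G.Contractible e) {v : G.V}
    (hv : v ≠ G.base) (h : G.degIn v = 1) : ∃ e, G.src e = v ∧ G.tgt e = v := by
  obtain ⟨e, rfl⟩ := one_le_degIn_iff.mp h.ge
  exact ⟨e, src_eq_tgt_of_degIn_eq_one (hnc e) hv h, rfl⟩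

theorem detIAminus_eq_zero_of_degOut_eq_one {v : G.V} (hv : v ≠ G.base) (h : G.degOut v = 1)
    (hloop : ∃ e, G.src e = v ∧ G.tgt e = v) : G.detIAminus = 0 := by
  classical
  obtain ⟨e, rfl, he⟩ := hloop
  let := Fintype.ofFinite {v : G.V // v ≠ G.base}
  rw [detIAminus_eq]
  refine Matrix.det_eq_zero_of_row_eq_zero ⟨G.src e, hv⟩ fun b => ?_
  rw [one_sub_adjMatrix_apply]
  by_cases hb : b = ⟨G.src e, hv⟩
  · subst hb
    have hcount : G.edgeCount (G.src e) (G.src e) = 1 :=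
      he ▸ edgeCount_src_tgt_of_degOut_eq_one h
    rw [if_pos rfl, hcount, Nat.cast_one, sub_self]
  · have hbe : b.1 ≠ G.tgt e := fun hbe => hb (Subtype.ext (hbe.trans he))
    rw [if_neg (Ne.symm hb), edgeCount_src_eq_zero_of_degOut_eq_one h hbe, Nat.cast_zero,
      sub_zero]

theorem detIAminus_eq_zero_of_degIn_eq_one {v : G.V} (hv : v ≠ G.base) (h : G.degIn v = 1)
    (hloop : ∃ e, G.src e = v ∧ G.tgt e = v) : G.detIAminus = 0 := by
  obtain ⟨e, hs, ht⟩ := hloop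
  exact detIAminus_rev ▸ detIAminus_eq_zero_of_degOut_eq_one (G := G.rev) hv h ⟨e, ht, hs⟩

def WeaklySemistable (G : PGraph) : Prop :=
  ∀ v : G.V, v ≠ G.base → (∃ e, G.tgt e = v) ∧ (∃ e, G.src e = v)

theorem Semistable.weaklySemistable (h : G.Semistable) : G.WeaklySemistable := fun v hv =>
  ⟨one_le_degIn_iff.mp (h v hv).1, one_le_degOut_iff.mp (h v hv).2.1⟩

theorem detIAminus_eq_zero_of_not_stable (hW : G.WeaklySemistable)
    (hnc : ∀ e, ¬ G.Contractible e) (hns : ¬ G.Stable) : G.detIAminus = 0 := by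
  obtain ⟨v, hv, hdeg⟩ : ∃ v, v ≠ G.base ∧ (G.degIn v < 2 ∨ G.degOut v < 2) := by
    simpa only [Stable, not_forall, not_and_or, not_le, exists_prop] using hns
  have hin := one_le_degIn_iff.mpr (hW v hv).1
  have hout := one_le_degOut_iff.mpr (hW v hv).2
  rcases hdeg with hdeg | hdeg
  · have h : G.degIn v = 1 := by omega
    exact detIAminus_eq_zero_of_degIn_eq_one hv h (exists_loop_of_degIn_eq_one hnc hv h)
  · have h : G.degOut v = 1 := by omega
    exact detIAminus_eq_zero_of_degOut_eq_one hv h (exists_loop_of_degOut_eq_one hnc hv h)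

section Contract

variable {e0 : G.E}

theorem mk_eq_mk_iff {a b : G.V} :
    Quot.mk (G.mergeRel e0) a = Quot.mk (G.mergeRel e0) b ↔ G.mergeRel e0 a b := by
  have hequiv : Equivalence (G.mergeRel e0) :=
    ⟨fun _ => Or.inl rfl, by unfold mergeRel; grind, by unfold mergeRel; grind⟩
  rw [Quot.eq, hequiv.eqvGen_iff]

theorem exists_mk_eq_ne (hne : G.src e0 ≠ G.tgt e0) (c : (G.contract e0).V) {z : G.V}
    (hz : z = G.src e0 ∨ z = G.tgt e0) : ∃ b, Quot.mk (G.mergeRel e0) b = c ∧ b ≠ z := by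
  induction c using Quot.ind with | mk a =>
  by_cases ha : a = z
  · subst ha
    rcases hz with rfl | rfl
    · exact ⟨G.tgt e0, Quot.sound (Or.inr ⟨Or.inr rfl, Or.inl rfl⟩), hne.symm⟩
    · exact ⟨G.src e0, Quot.sound (Or.inr ⟨Or.inl rfl, Or.inr rfl⟩), hne⟩
  · exact ⟨a, rfl, ha⟩

theorem WeaklySemistable.contract (hW : G.WeaklySemistable) (hne : G.src e0 ≠ G.tgt e0) :
    (G.contract e0).WeaklySemistable := by
  intro c hc
  have hord : ∀ b, Quot.mk (G.mergeRel e0) b = c → b ≠ G.base := by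
    rintro b rfl rfl
    exact hc rfl
  obtain ⟨b, hbc, hbw⟩ := exists_mk_eq_ne hne c (Or.inr rfl)
  obtain ⟨b', hb'c, hb'u⟩ := exists_mk_eq_ne hne c (Or.inl rfl)
  obtain ⟨eIn, rfl⟩ := (hW b (hord _ hbc)).1
  obtain ⟨eOut, rfl⟩ := (hW b' (hord _ hb'c)).2
  exact ⟨⟨⟨eIn, by rintro rfl; exact hbw rfl⟩, hbc⟩, ⟨⟨eOut, by rintro rfl; exact hb'u rfl⟩, hb'c⟩⟩

def Iso.refl (G : PGraph) : Iso G G :=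
  ⟨Equiv.refl _, Equiv.refl _, fun _ => rfl, fun _ => rfl, rfl⟩

theorem Stabilizable.of_contract (hc : G.Contractible e0) (h : (G.contract e0).Stabilizable) :
    G.Stabilizable := by
  obtain ⟨H, hsteps, hH⟩ := h
  exact ⟨H, .head ⟨e0, hc, ⟨Iso.refl _⟩⟩ hsteps, hH⟩

theorem Stable.stabilizable (h : G.Stable) : G.Stabilizable := ⟨G, .refl, h⟩

theorem card_edge_contract_lt : Nat.card (G.contract e0).E < Nat.card G.E :=
  Finite.card_subtype_lt (p := (· ≠ e0)) (not_not.mpr rfl)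

theorem edgeCount_contract (h1 : G.degOut (G.src e0) = 1) {a b : G.V} (ha : a ≠ G.src e0)
    (hb : b ≠ G.src e0) :
    (G.contract e0).edgeCount (Quot.mk _ a) (Quot.mk _ b) =
      G.edgeCount a b + G.edgeCount a (G.src e0) * G.edgeCount (G.src e0) b := by
  have hsrc : ∀ e, e ≠ e0 → (Quot.mk (G.mergeRel e0) (G.src e) = Quot.mk _ a ↔ G.src e = a) := by
    intro e he
    have : G.src e ≠ G.src e0 := fun h => he (eq_of_degOut_eq_one h1 h)
    rw [mk_eq_mk_iff]
    unfold mergeRel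
    grind
  have htgt : ∀ e, Quot.mk (G.mergeRel e0) (G.tgt e) = Quot.mk _ b ↔
      G.tgt e = b ∨ G.tgt e = G.src e0 ∧ b = G.tgt e0 := by
    intro e
    rw [mk_eq_mk_iff]
    unfold mergeRel
    grind
  have hcount : (G.contract e0).edgeCount (Quot.mk _ a) (Quot.mk _ b) = Nat.card {e : G.E //
      G.src e = a ∧ G.tgt e = b ∨ (G.src e = a ∧ G.tgt e = G.src e0) ∧ b = G.tgt e0} := by
    refine Nat.card_congr ((Equiv.subtypeEquivRight fun (x : {e // e ≠ e0}) => ?_).trans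
      (Equiv.subtypeSubtypeEquivSubtype fun {e} he => ?_))
    · exact (and_congr (hsrc x.1 x.2) (htgt x.1)).trans (by tauto)
    · rintro rfl
      exact ha (by rcases he with ⟨h, -⟩ | ⟨⟨h, -⟩, -⟩ <;> exact h.symm)
  rw [hcount, Nat.card_subtype_or_of_disjoint fun e h h' => hb (h.2.symm.trans h'.1.2)]
  congr 1
  by_cases hbw : b = G.tgt e0
  · subst hbw
    rw [edgeCount_src_tgt_of_degOut_eq_one h1, mul_one]
    simp only [and_true, edgeCount]
  · simp only [hbw, and_false, edgeCount_src_eq_zero_of_degOut_eq_one h1 hbw, mul_zero]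
    exact Nat.card_of_isEmpty

theorem mk_ne_mk_base (hu : G.src e0 ≠ G.base) {x : G.V} (hx : x ≠ G.base)
    (hxu : x ≠ G.src e0) : Quot.mk (G.mergeRel e0) x ≠ Quot.mk _ G.base := by
  rw [Ne, mk_eq_mk_iff]
  unfold mergeRel
  grind

theorem bijective_mk_ordinary (hne : G.src e0 ≠ G.tgt e0) (hu : G.src e0 ≠ G.base) :
    Function.Bijective fun x : {x : {v : G.V // v ≠ G.base} // x ≠ ⟨G.src e0, hu⟩} =>
      (⟨Quot.mk _ x.1.1, mk_ne_mk_base hu x.1.2 fun h => x.2 (Subtype.ext h)⟩ :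
        {c : (G.contract e0).V // c ≠ (G.contract e0).base}) := by
  refine ⟨fun x y hxy => ?_, fun ⟨c, hc⟩ => ?_⟩
  · have hx : x.1.1 ≠ G.src e0 := fun h => x.2 (Subtype.ext h)
    have hy : y.1.1 ≠ G.src e0 := fun h => y.2 (Subtype.ext h)
    have hxy : G.mergeRel e0 x.1.1 y.1.1 := mk_eq_mk_iff.mp (congrArg Subtype.val hxy)
    unfold mergeRel at hxy
    exact Subtype.ext (Subtype.ext (by grind))
  · obtain ⟨b, rfl, hb⟩ := exists_mk_eq_ne hne c (Or.inl rfl)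
    have hbase : b ≠ G.base := by
      rintro rfl
      exact hc rfl
    exact ⟨⟨⟨b, hbase⟩, fun h => hb (congrArg Subtype.val h)⟩, rfl⟩

theorem detIAminus_contract_of_degOut_eq_one (hne : G.src e0 ≠ G.tgt e0)
    (hu : G.src e0 ≠ G.base) (h1 : G.degOut (G.src e0) = 1) :
    (G.contract e0).detIAminus = G.detIAminus := by
  classical
  let := Fintype.ofFinite {v : G.V // v ≠ G.base}
  let := Fintype.ofFinite {c : (G.contract e0).V // c ≠ (G.contract e0).base}
  have hpivot : (1 - G.adjMatrix) ⟨G.src e0, hu⟩ ⟨G.src e0, hu⟩ = 1 := by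
    rw [one_sub_adjMatrix_apply, if_pos rfl, edgeCount_src_eq_zero_of_degOut_eq_one h1 hne,
      Nat.cast_zero, sub_zero]
  rw [detIAminus_eq, detIAminus_eq, Matrix.det_eq_det_pivot _ _ hpivot,
    ← Matrix.det_submatrix_equiv_self (Equiv.ofBijective _ (bijective_mk_ordinary hne hu))]
  congr 1
  ext x y
  have hx : x.1.1 ≠ G.src e0 := fun h => x.2 (Subtype.ext h)
  have hy : y.1.1 ≠ G.src e0 := fun h => y.2 (Subtype.ext h)
  simp only [Matrix.submatrix_apply, Matrix.of_apply, Equiv.ofBijective_apply,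
    one_sub_adjMatrix_apply, edgeCount_contract h1 hx hy,
    (bijective_mk_ordinary hne hu).1.eq_iff, Subtype.coe_inj, if_neg x.2, if_neg (Ne.symm y.2)]
  push_cast
  ring

theorem detIAminus_contract (hc : G.Contractible e0) :
    (G.contract e0).detIAminus = G.detIAminus := by
  obtain ⟨hne, ⟨hu, h1⟩ | ⟨hw, h1⟩⟩ := hc
  · exact detIAminus_contract_of_degOut_eq_one hne hu h1
  · have := detIAminus_contract_of_degOut_eq_one (G := G.rev) (Ne.symm hne) hw h1
    rwa [rev_contract, detIAminus_rev, detIAminus_rev] at this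

end Contract

theorem detIAminus_eq_zero_of_not_stabilizable {G : PGraph} (hW : G.WeaklySemistable)
    (hns : ¬ G.Stabilizable) : G.detIAminus = 0 := by
  by_cases hc : ∃ e0, G.Contractible e0
  · obtain ⟨e0, hc⟩ := hc
    rw [← detIAminus_contract hc]
    exact detIAminus_eq_zero_of_not_stabilizable (hW.contract hc.1)
      fun hs => hns (hs.of_contract hc)
  · exact detIAminus_eq_zero_of_not_stable hW (not_exists.mp hc) fun hs => hns hs.stabilizable
termination_by Nat.card G.E
decreasing_by exact card_edge_contract_lt

end PGraph

/-- In a semistable pointed graph with no contractible edges that is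
non-stabilizable, every strictly semistable ordinary vertex (total degree 3) carries a
self-loop; consequently det(I − A(Γ₋)) = 0 for any non-stabilizable semistable
pointed graph. -/
theorem nonstabilizable_loop_and_det :
    (∀ Γ : PGraph, Γ.Semistable → (∀ e : Γ.E, ¬ Γ.Contractible e) → ¬ Γ.Stabilizable →
      ∀ v : Γ.V, v ≠ Γ.base → Γ.degIn v + Γ.degOut v = 3 →
        ∃ e : Γ.E, Γ.src e = v ∧ Γ.tgt e = v) ∧
    (∀ Γ : PGraph, Γ.Semistable → ¬ Γ.Stabilizable → Γ.detIAminus = 0) := by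
  refine ⟨fun Γ hss hnc _ v hv hdeg => ?_, fun Γ hss hns =>
    PGraph.detIAminus_eq_zero_of_not_stabilizable hss.weaklySemistable hns⟩
  obtain ⟨hin, hout, -⟩ := hss v hv
  rcases (by omega : Γ.degIn v = 1 ∨ Γ.degOut v = 1) with h | h
  · exact PGraph.exists_loop_of_degIn_eq_one hnc hv h
  · exact PGraph.exists_loop_of_degOut_eq_one hnc hv h
end
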